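/- arXiv:2304.10617 — 2 statements merged into one kernel-verified Lean document; each statement's English description precedes it below -/
import Mathlib

section
/- With A(t) = (1/t) ∫_0^1 r · I(r/t)/I(1/t) dr, one has lim_{t→0⁺} A(t) = 1. (This is the statement that the function A(t) = C_d(1/t) ∫_0^1 r/(t C_d(r/t)) dr of the paper's lemma on the coefficients A, B, C converges to 1, expressed through the normalization integral I(β) = C_d(β)⁻¹.) -/
open MeasureTheory Filter Metric RealInnerProductSpace
open scoped Pointwise

set_option maxHeartbeats 1000000 in
lemma aux_G_tendsto {α : Type*} [MeasurableSpace α] (μ : Measure α) [IsFiniteMeasure μ]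
    (f : α → ℝ) (hfm : Measurable f) (hb : ∀ x, |f x| ≤ 1)
    (hcap : ∀ δ : ℝ, 0 < δ → 0 < (μ {x | 1 - δ < f x}).toReal)
    (I : ℝ → ℝ) (hI : ∀ β, I β = ∫ x, Real.exp (β * f x) ∂μ) :
    Tendsto (fun β : ℝ => (∫ u in (0:ℝ)..β, u * I u) / (β * I β)) atTop (nhds 1) := by
  have hint : ∀ β : ℝ, Integrable (fun x => Real.exp (β * f x)) μ := by
    intro β
    refine Integrable.mono' (integrable_const (Real.exp |β|))
      ((hfm.const_mul β).exp.aestronglyMeasurable) ?_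
    filter_upwards with x
    rw [Real.norm_eq_abs, Real.abs_exp]
    apply Real.exp_le_exp.2
    calc β * f x ≤ |β * f x| := le_abs_self _
      _ = |β| * |f x| := abs_mul _ _
      _ ≤ |β| * 1 := by gcongr; exact hb x
      _ = |β| := mul_one _
  -- continuity of I
  have hIc : Continuous I := by
    have hIe : I = fun β => ∫ x, Real.exp (β * f x) ∂μ := funext hI
    rw [hIe, continuous_iff_continuousAt]
    intro β₀
    apply continuousAt_of_dominated (bound := fun _ => Real.exp (|β₀| + 1))
    · filter_upwards with β
      exact (hfm.const_mul β).exp.aestronglyMeasurable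
    · filter_upwards [Metric.ball_mem_nhds β₀ one_pos] with β hβ
      filter_upwards with x
      rw [Real.norm_eq_abs, Real.abs_exp]
      apply Real.exp_le_exp.2
      have hβ' : |β| ≤ |β₀| + 1 := by
        have h1 := mem_ball_iff_norm.1 hβ
        rw [Real.norm_eq_abs] at h1
        have h2 := abs_sub_abs_le_abs_sub β β₀
        linarith
      calc β * f x ≤ |β * f x| := le_abs_self _
        _ = |β| * |f x| := abs_mul _ _
        _ ≤ (|β₀| + 1) * 1 := by
            apply mul_le_mul hβ' (hb x) (abs_nonneg _) (by positivity)
        _ = |β₀| + 1 := mul_one _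
    · exact integrable_const _
    · filter_upwards with x
      exact (Real.continuous_exp.comp (continuous_id.mul continuous_const)).continuousAt
  -- lower bound for I via caps
  have hIlow : ∀ δ : ℝ, 0 < δ → ∀ β : ℝ, 0 ≤ β →
      Real.exp (β * (1 - δ)) * (μ {x | 1 - δ < f x}).toReal ≤ I β := by
    intro δ hδ β hβ
    have hms : MeasurableSet {x | 1 - δ < f x} := hfm measurableSet_Ioi
    rw [hI]
    calc Real.exp (β * (1 - δ)) * (μ {x | 1 - δ < f x}).toReal
        = ∫ _ in {x | 1 - δ < f x}, Real.exp (β * (1 - δ)) ∂μ := by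
          rw [setIntegral_const]; rw [smul_eq_mul]; rw [measureReal_def]; ring
      _ ≤ ∫ x in {x | 1 - δ < f x}, Real.exp (β * f x) ∂μ := by
          apply setIntegral_mono_on ((integrable_const _).integrableOn)
            ((hint β).integrableOn) hms
          intro x hx
          exact Real.exp_le_exp.2 (by nlinarith [Set.mem_setOf_eq ▸ hx])
      _ ≤ ∫ x, Real.exp (β * f x) ∂μ := by
          apply setIntegral_le_integral (hint β)
          filter_upwards with x using (Real.exp_pos _).le
  have hIpos : ∀ β : ℝ, 0 ≤ β → 0 < I β := by
    intro β hβ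
    exact lt_of_lt_of_le (mul_pos (Real.exp_pos _) (hcap 1 one_pos)) (hIlow 1 one_pos β hβ)
  set M : ℝ := (μ Set.univ).toReal with hM
  have hM0 : 0 ≤ M := ENNReal.toReal_nonneg
  -- pointwise comparison of I values
  have hII : ∀ β : ℝ, IntervalIntegrable (fun u => u * I u) volume 0 β :=
    fun β => (continuous_id.mul hIc).intervalIntegrable 0 β
  -- global lower bound for G
  have hlow : ∀ β : ℝ, 0 < β → 1 - 1/β ≤ (∫ u in (0:ℝ)..β, u * I u) / (β * I β) := by
    intro β hβ
    have hIβ := hIpos β hβ.le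
    have h1 : ∀ u ∈ Set.Icc (0:ℝ) β, I β * (u * Real.exp (u - β)) ≤ u * I u := by
      intro u hu
      have hkey : I β ≤ Real.exp (β - u) * I u := by
        rw [hI, hI, ← integral_const_mul]
        apply integral_mono (hint β) ((hint u).const_mul _)
        intro x
        dsimp only
        rw [← Real.exp_add]
        apply Real.exp_le_exp.2
        nlinarith [(abs_le.1 (hb x)).2, hu.2]
      have hexp : Real.exp (β - u) * Real.exp (u - β) = 1 := by
        rw [← Real.exp_add]; ring_nf; exact Real.exp_zero
      have : I β * Real.exp (u - β) ≤ I u := by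
        calc I β * Real.exp (u - β) ≤ (Real.exp (β - u) * I u) * Real.exp (u - β) := by
              apply mul_le_mul_of_nonneg_right hkey (Real.exp_pos _).le
          _ = (Real.exp (β - u) * Real.exp (u - β)) * I u := by ring
          _ = I u := by rw [hexp, one_mul]
      calc I β * (u * Real.exp (u - β)) = u * (I β * Real.exp (u - β)) := by ring
        _ ≤ u * I u := by apply mul_le_mul_of_nonneg_left this hu.1
    have h2 : I β * (β - 1 + Real.exp (-β)) ≤ ∫ u in (0:ℝ)..β, u * I u := by
      have hcont : Continuous (fun u : ℝ => I β * (u * Real.exp (u - β))) := by continuity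
      have h3 : (∫ u in (0:ℝ)..β, I β * (u * Real.exp (u - β)))
          ≤ ∫ u in (0:ℝ)..β, u * I u :=
        intervalIntegral.integral_mono_on hβ.le (hcont.intervalIntegrable 0 β) (hII β) h1
      have h4 : (∫ u in (0:ℝ)..β, u * Real.exp (u - β)) = β - 1 + Real.exp (-β) := by
        have hderiv : ∀ u ∈ Set.uIcc (0:ℝ) β,
            HasDerivAt (fun u : ℝ => (u - 1) * Real.exp (u - β)) (u * Real.exp (u - β)) u := by
          intro u _
          have h5 : HasDerivAt (fun u : ℝ => u - β) 1 u := (hasDerivAt_id u).sub_const β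
          have := (((hasDerivAt_id u).sub_const 1).mul h5.exp)
          exact this.congr_deriv (by
            change 1 * Real.exp (u - β) + (u - 1) * (Real.exp (u - β) * 1) = u * Real.exp (u - β)
            ring)
        rw [intervalIntegral.integral_eq_sub_of_hasDerivAt hderiv
          ((continuous_id.mul (Real.continuous_exp.comp (continuous_id.sub continuous_const))).intervalIntegrable 0 β)]
        rw [sub_self, Real.exp_zero, zero_sub]
        ring
      calc I β * (β - 1 + Real.exp (-β))
          = ∫ u in (0:ℝ)..β, I β * (u * Real.exp (u - β)) := by
            rw [intervalIntegral.integral_const_mul, h4]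
        _ ≤ _ := h3
    rw [le_div_iff₀ (by positivity)]
    calc (1 - 1/β) * (β * I β) = I β * (β - 1) := by field_simp
      _ ≤ I β * (β - 1 + Real.exp (-β)) := by nlinarith [Real.exp_pos (-β), hIβ]
      _ ≤ _ := h2
  -- upper bound for G
  have hup : ∀ ε : ℝ, 0 < ε → ε < 1 → ∀ β : ℝ, 0 < β →
      (∫ u in (0:ℝ)..β, u * I u) / (β * I β)
        ≤ (1 + (M / (μ {x | 1 - ε/2 < f x}).toReal) * Real.exp (-(β * ε / 2))) / (1 - ε) := by
    intro ε hε hε1 β hβ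
    set c : ℝ := 1 - ε with hc
    have hc0 : 0 < c := by simp [hc]; linarith
    set κ : ℝ := (μ {x | 1 - ε/2 < f x}).toReal with hκ
    have hκ0 : 0 < κ := hcap (ε/2) (by linarith)
    have hIβ := hIpos β hβ.le
    set K : ℝ := I β * Real.exp (-(c * β)) + M with hK
    have hK0 : 0 ≤ K := by positivity
    -- pointwise bound for I u
    have hIu : ∀ u ∈ Set.Icc (0:ℝ) β, u * I u ≤ K * (u * Real.exp (c * u)) := by
      intro u hu
      have hIub : I u ≤ Real.exp (c * (u - β)) * I β + M * Real.exp (c * u) := by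
        rw [hI, hI]
        have : (Real.exp (c * (u - β)) * ∫ x, Real.exp (β * f x) ∂μ) + M * Real.exp (c * u)
            = ∫ x, (Real.exp (c * (u - β)) * Real.exp (β * f x) + Real.exp (c * u)) ∂μ := by
          rw [integral_add ((hint β).const_mul _) (integrable_const _),
            integral_const_mul, integral_const, smul_eq_mul, measureReal_def]
        rw [this]
        apply integral_mono (hint u) (((hint β).const_mul _).add (integrable_const _))
        intro x
        dsimp only [Pi.add_apply]
        rcases le_or_gt c (f x) with hfx | hfx
        · have h1 : Real.exp (u * f x) ≤ Real.exp (c * (u - β)) * Real.exp (β * f x) := by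
            rw [← Real.exp_add]
            apply Real.exp_le_exp.2
            nlinarith [hu.2, hfx]
          nlinarith [Real.exp_pos (c * u), h1]
        · have h1 : Real.exp (u * f x) ≤ Real.exp (c * u) := by
            apply Real.exp_le_exp.2
            nlinarith [hu.1, hfx.le]
          nlinarith [Real.exp_pos (c * (u - β)), Real.exp_pos (β * f x), h1]
      have hre : Real.exp (c * (u - β)) = Real.exp (c * u) * Real.exp (-(c * β)) := by
        rw [← Real.exp_add]; ring_nf
      calc u * I u ≤ u * (Real.exp (c * (u - β)) * I β + M * Real.exp (c * u)) := by
            apply mul_le_mul_of_nonneg_left hIub hu.1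
        _ = K * (u * Real.exp (c * u)) := by rw [hre, hK]; ring
    have hint1 : (∫ u in (0:ℝ)..β, u * I u) ≤ K * ∫ u in (0:ℝ)..β, u * Real.exp (c * u) := by
      rw [← intervalIntegral.integral_const_mul]
      apply intervalIntegral.integral_mono_on hβ.le (hII β) ?_ hIu
      exact ((continuous_const.mul (continuous_id.mul
        (Real.continuous_exp.comp (continuous_const.mul continuous_id))))).intervalIntegrable 0 β
    have hint2 : (∫ u in (0:ℝ)..β, u * Real.exp (c * u)) ≤ β * (Real.exp (c * β) / c) := by
      have h1 : (∫ u in (0:ℝ)..β, u * Real.exp (c * u))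
          ≤ ∫ u in (0:ℝ)..β, β * Real.exp (c * u) := by
        apply intervalIntegral.integral_mono_on hβ.le
          ((continuous_id.mul (Real.continuous_exp.comp (continuous_const.mul continuous_id))).intervalIntegrable 0 β)
          ((continuous_const.mul (Real.continuous_exp.comp (continuous_const.mul continuous_id))).intervalIntegrable 0 β)
        intro u hu
        apply mul_le_mul_of_nonneg_right hu.2 (Real.exp_pos _).le
      have h2 : (∫ u in (0:ℝ)..β, Real.exp (c * u)) = (Real.exp (c * β) - 1) / c := by
        have hderiv : ∀ u ∈ Set.uIcc (0:ℝ) β,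
            HasDerivAt (fun u : ℝ => Real.exp (c * u) / c) (Real.exp (c * u)) u := by
          intro u _
          have h5 : HasDerivAt (fun u : ℝ => c * u) c u := by
            simpa using (hasDerivAt_id u).const_mul c
          have := h5.exp.div_const c
          exact this.congr_deriv (mul_div_cancel_right₀ _ hc0.ne')
        rw [intervalIntegral.integral_eq_sub_of_hasDerivAt hderiv
          ((Real.continuous_exp.comp (continuous_const.mul continuous_id)).intervalIntegrable 0 β)]
        simp [Real.exp_zero]
        ring
      calc (∫ u in (0:ℝ)..β, u * Real.exp (c * u))
          ≤ ∫ u in (0:ℝ)..β, β * Real.exp (c * u) := h1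
        _ = β * ((Real.exp (c * β) - 1) / c) := by
            rw [intervalIntegral.integral_const_mul, h2]
        _ ≤ β * (Real.exp (c * β) / c) := by
            apply mul_le_mul_of_nonneg_left _ hβ.le
            apply (div_le_div_iff_of_pos_right hc0).2
            linarith
    -- lower bound for I β via cap ε/2
    have hIcap : Real.exp (β * (1 - ε/2)) * κ ≤ I β := hIlow (ε/2) (by linarith) β hβ.le
    rw [div_le_div_iff₀ (by positivity) (by linarith)]
    have hKe : K * Real.exp (c * β) = I β + M * Real.exp (c * β) := by
      rw [hK]
      have : Real.exp (-(c * β)) * Real.exp (c * β) = 1 := by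
        rw [← Real.exp_add]; ring_nf; exact Real.exp_zero
      calc (I β * Real.exp (-(c * β)) + M) * Real.exp (c * β)
          = I β * (Real.exp (-(c * β)) * Real.exp (c * β)) + M * Real.exp (c * β) := by ring
        _ = I β + M * Real.exp (c * β) := by rw [this, mul_one]
    have hMe : M * Real.exp (c * β) ≤ (M / κ) * Real.exp (-(β * ε / 2)) * I β := by
      calc M * Real.exp (c * β)
          = (M / κ) * Real.exp (-(β * ε / 2)) * (Real.exp (β * (1 - ε/2)) * κ) := by
            have hee : Real.exp (-(β * ε / 2)) * Real.exp (β * (1 - ε/2)) = Real.exp (c * β) := by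
              rw [← Real.exp_add]; congr 1; rw [hc]; ring
            rw [← hee]
            field_simp
        _ ≤ (M / κ) * Real.exp (-(β * ε / 2)) * I β := by
            apply mul_le_mul_of_nonneg_left hIcap (by positivity)
    calc (∫ u in (0:ℝ)..β, u * I u) * (1 - ε)
        ≤ (K * (β * (Real.exp (c * β) / c))) * (1 - ε) := by
          apply mul_le_mul_of_nonneg_right _ (by linarith)
          calc (∫ u in (0:ℝ)..β, u * I u) ≤ K * ∫ u in (0:ℝ)..β, u * Real.exp (c * u) := hint1
            _ ≤ K * (β * (Real.exp (c * β) / c)) := by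
                apply mul_le_mul_of_nonneg_left hint2 hK0
      _ = β * (K * Real.exp (c * β)) := by
          have h1e : (1:ℝ) - ε ≠ 0 := (by linarith : (0:ℝ) < 1 - ε).ne'
          rw [hc]
          field_simp
      _ = β * (I β + M * Real.exp (c * β)) := by rw [hKe]
      _ ≤ β * (I β + (M / κ) * Real.exp (-(β * ε / 2)) * I β) := by
          apply mul_le_mul_of_nonneg_left _ hβ.le
          linarith
      _ = (1 + M / κ * Real.exp (-(β * ε / 2))) * (β * I β) := by ring
  -- conclude by order tendsto
  rw [tendsto_order]
  constructor
  · intro a ha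
    have h1 : Tendsto (fun β : ℝ => 1 - 1/β) atTop (nhds 1) := by
      have h0 : Tendsto (fun β : ℝ => 1/β) atTop (nhds 0) := by
        simpa only [one_div] using (tendsto_inv_atTop_zero : Tendsto (fun x:ℝ => x⁻¹) atTop (nhds 0))
      simpa using tendsto_const_nhds.sub h0
    filter_upwards [h1.eventually_const_lt ha, eventually_gt_atTop (0:ℝ)] with β h2 h3
    exact lt_of_lt_of_le h2 (hlow β h3)
  · intro b hb1
    set ε : ℝ := (b - 1) / (2 * b) with hε
    have hb0 : 0 < b := by linarith
    have hε0 : 0 < ε := div_pos (by linarith) (by linarith)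
    have hε1 : ε < 1 := by rw [hε, div_lt_one (by positivity)]; linarith
    set κ : ℝ := (μ {x | 1 - ε/2 < f x}).toReal with hκ
    have hκ0 : 0 < κ := hcap (ε/2) (by linarith)
    have hb' : b ≠ 0 := by positivity
    have h1ε : (0:ℝ) < 1 - ε := by linarith
    have hbε : 1 + (b - 1)/2 = b * (1 - ε) := by
      rw [hε]; field_simp; ring
    have hη : (1 + (b - 1)/2) / (1 - ε) = b := by
      rw [hbε, mul_div_assoc, div_self h1ε.ne', mul_one]
    have htend : Tendsto (fun β : ℝ => (M / κ) * Real.exp (-(β * ε / 2))) atTop (nhds 0) := by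
      rw [show (0:ℝ) = (M / κ) * 0 by ring]
      apply Tendsto.const_mul
      have h0 : Tendsto (fun β : ℝ => β * ε / 2) atTop atTop := by
        apply Tendsto.atTop_div_const (by norm_num)
        exact Tendsto.atTop_mul_const hε0 tendsto_id
      exact Real.tendsto_exp_neg_atTop_nhds_zero.comp h0
    filter_upwards [htend.eventually_lt_const (show (0:ℝ) < (b-1)/2 by linarith),
        eventually_gt_atTop (0:ℝ)] with β h2 h3
    calc (∫ u in (0:ℝ)..β, u * I u) / (β * I β)
        ≤ (1 + (M / κ) * Real.exp (-(β * ε / 2))) / (1 - ε) := hup ε hε0 hε1 β h3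
      _ < (1 + (b - 1)/2) / (1 - ε) := by
          apply (div_lt_div_iff_of_pos_right (by linarith)).2
          linarith
      _ = b := hη

/-- The unit sphere `S^d` in `ℝ^{d+1}`. -/
abbrev unitSphere (d : ℕ) := Metric.sphere (0 : EuclideanSpace ℝ (Fin (d + 1))) 1

/-- The rotation-invariant surface measure `σ` on `S^d`, obtained from the Lebesgue
measure on `ℝ^{d+1}`. -/
noncomputable def sphereMeasure (d : ℕ) : Measure (unitSphere d) :=
  (volume : Measure (EuclideanSpace ℝ (Fin (d + 1)))).toSphere

set_option maxHeartbeats 1000000 in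
/-- with `A(t) = (1/t) ∫_0^1 r · I(r/t)/I(1/t) dr`, one has
`lim_{t→0⁺} A(t) = 1`, where `I(β) = ∫_{S^d} exp (β ⟪s, x⟫) dσ x` is the von Mises–Fisher
normalization integral (`C_d(β) = I(β)⁻¹`). -/
theorem vmf_coefficient_A_tendsto_one (d : ℕ) (hd : 1 ≤ d) (s : unitSphere d)
    (I : ℝ → ℝ)
    (hI : ∀ β : ℝ, I β =
      ∫ x : unitSphere d, Real.exp (β * ⟪(s : EuclideanSpace ℝ (Fin (d + 1))), (x : EuclideanSpace ℝ (Fin (d + 1)))⟫) ∂(sphereMeasure d))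
    (A : ℝ → ℝ)
    (hA : ∀ t : ℝ, A t = (1 / t) * ∫ r in (0 : ℝ)..1, r * I (r / t) / I (1 / t)) :
    Tendsto A (nhdsWithin 0 (Set.Ioi 0)) (nhds 1) := by
  haveI : IsFiniteMeasure (sphereMeasure d) := by unfold sphereMeasure; infer_instance
  set E := EuclideanSpace ℝ (Fin (d + 1)) with hE
  have hsn : ‖(s : E)‖ = 1 := mem_sphere_zero_iff_norm.1 s.2
  set f : unitSphere d → ℝ := fun x => ⟪(s : E), (x : E)⟫ with hfd
  have hfc : Continuous f := continuous_const.inner continuous_subtype_val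
  have hb : ∀ x, |f x| ≤ 1 := by
    intro x
    have h2 : ‖(x : E)‖ = 1 := mem_sphere_zero_iff_norm.1 x.2
    calc |f x| ≤ ‖(s : E)‖ * ‖(x : E)‖ := abs_real_inner_le_norm _ _
      _ = 1 := by rw [hsn, h2, mul_one]
  have hcap : ∀ δ : ℝ, 0 < δ → 0 < ((sphereMeasure d) {x | 1 - δ < f x}).toReal := by
    intro δ hδ
    have hms : MeasurableSet {x : unitSphere d | 1 - δ < f x} := by
      have : {x : unitSphere d | 1 - δ < f x} = f ⁻¹' Set.Ioi (1 - δ) := rfl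
      rw [this]
      exact hfc.measurable measurableSet_Ioi
    apply ENNReal.toReal_pos ?_ (measure_ne_top _ _)
    rw [sphereMeasure, Measure.toSphere_apply' _ hms]
    apply mul_ne_zero
    · simp [finrank_euclideanSpace_fin]
    -- volume of the cone is positive
    set U : Set E := {y | ‖y‖ < 1 ∧ (1 - δ) * ‖y‖ < ⟪(s : E), y⟫ ∧ y ≠ 0} with hU
    have heq : Set.Ioo (0:ℝ) 1 • (Subtype.val '' {x : unitSphere d | 1 - δ < f x}) = U := by
      ext y
      constructor
      · rintro ⟨r, hr, z, ⟨x, hx, rfl⟩, rfl⟩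
        have hxn : ‖(x : E)‖ = 1 := mem_sphere_zero_iff_norm.1 x.2
        have hrn : ‖r • (x : E)‖ = r := by
          rw [norm_smul, Real.norm_eq_abs, abs_of_pos hr.1, hxn, mul_one]
        refine ⟨by rw [hrn]; exact hr.2, ?_, ?_⟩
        · rw [hrn, real_inner_smul_right]
          calc (1 - δ) * r = r * (1 - δ) := mul_comm _ _
            _ < r * ⟪(s : E), (x : E)⟫ := by
                apply mul_lt_mul_of_pos_left hx hr.1
        · apply smul_ne_zero (ne_of_gt hr.1)
          intro h0
          rw [h0] at hxn
          simp at hxn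
      · rintro ⟨h1, h2, h3⟩
        have hy0 : 0 < ‖y‖ := norm_pos_iff.2 h3
        have hxs : (‖y‖⁻¹ • y) ∈ Metric.sphere (0 : E) 1 := by
          rw [mem_sphere_zero_iff_norm, norm_smul, Real.norm_eq_abs,
            abs_of_pos (inv_pos.2 hy0), inv_mul_cancel₀ hy0.ne']
        refine ⟨‖y‖, ⟨hy0, h1⟩, ‖y‖⁻¹ • y, ⟨⟨‖y‖⁻¹ • y, hxs⟩, ?_, rfl⟩, ?_⟩
        · show 1 - δ < ⟪(s : E), ‖y‖⁻¹ • y⟫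
          rw [real_inner_smul_right]
          rw [show (1:ℝ) - δ = ‖y‖⁻¹ * ((1 - δ) * ‖y‖) by field_simp]
          exact mul_lt_mul_of_pos_left h2 (inv_pos.2 hy0)
        · show ‖y‖ • ‖y‖⁻¹ • y = y
          rw [smul_smul, mul_inv_cancel₀ hy0.ne', one_smul]
    rw [heq]
    have hUopen : IsOpen U :=
      (isOpen_lt continuous_norm continuous_const).and
        ((isOpen_lt (continuous_const.mul continuous_norm)
          (continuous_const.inner continuous_id)).and isOpen_ne)
    have habs : |(1:ℝ)/2| = 1/2 := abs_of_pos (by norm_num)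
    have hUne : U.Nonempty := by
      refine ⟨(1/2 : ℝ) • (s : E), ?_, ?_, ?_⟩
      · rw [norm_smul, Real.norm_eq_abs, hsn, habs]; norm_num
      · rw [norm_smul, Real.norm_eq_abs, hsn, habs, real_inner_smul_right,
          real_inner_self_eq_norm_sq, hsn]
        nlinarith
      · apply smul_ne_zero (by norm_num)
        intro h0
        rw [h0] at hsn
        simp at hsn
    exact (hUopen.measure_pos volume hUne).ne'
  have hG := aux_G_tendsto (sphereMeasure d) f hfc.measurable hb hcap I hI
  have hmap : Tendsto (fun t : ℝ => 1 / t) (nhdsWithin 0 (Set.Ioi 0)) atTop := by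
    simpa only [one_div] using (tendsto_inv_nhdsGT_zero : Tendsto (fun x : ℝ => x⁻¹) (nhdsWithin 0 (Set.Ioi 0)) atTop)
  have hcomp := hG.comp hmap
  apply Tendsto.congr' ?_ hcomp
  filter_upwards [self_mem_nhdsWithin] with t ht
  have ht0 : (0 : ℝ) < t := ht
  show (∫ u in (0:ℝ)..(1/t), u * I u) / ((1/t) * I (1/t)) = A t
  rw [hA t]
  have h1 : (∫ r in (0:ℝ)..1, r * I (r/t) / I (1/t)) = (∫ r in (0:ℝ)..1, r * I (r/t)) / I (1/t) := by
    rw [intervalIntegral.integral_div]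
  have h2 : (∫ r in (0:ℝ)..1, r * I (r/t)) = t * (t * ∫ u in (0:ℝ)..(1/t), u * I u) := by
    have h3 : ∀ r ∈ Set.uIcc (0:ℝ) 1, r * I (r/t) = (fun u => t * (u * I u)) (r/t) := by
      intro r _
      dsimp only
      field_simp
    rw [intervalIntegral.integral_congr h3,
      intervalIntegral.integral_comp_div (f := fun u => t * (u * I u)) ht0.ne',
      zero_div, intervalIntegral.integral_const_mul, smul_eq_mul]
  rw [h1, h2]
  rcases eq_or_ne (I (1/t)) 0 with h | h
  · rw [h]; simp
  · field_simp
end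

section
/- With B(t) = ∫_0^1 r · I(r/t)/I(1/t) dr, one has lim_{t→0⁺} B(t) = 0. (This is the statement that the function B(t) = ∫_0^1 r C_d(1/t)/C_d(r/t) dr of the paper's lemma on the coefficients A, B, C vanishes as t → 0⁺, expressed through the normalization integral I(β) = C_d(β)⁻¹.) -/
open MeasureTheory Filter Metric RealInnerProductSpace

open Set
open scoped Pointwise ENNReal

noncomputable def uu {d : ℕ} (s : unitSphere d) (x : unitSphere d) : ℝ :=
  ⟪(s : EuclideanSpace ℝ (Fin (d+1))), (x : EuclideanSpace ℝ (Fin (d+1)))⟫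

noncomputable def J {d : ℕ} (s : unitSphere d) (β : ℝ) : ℝ :=
  ∫ x, Real.exp (β * uu s x) ∂(sphereMeasure d)

instance {d : ℕ} : IsFiniteMeasure (sphereMeasure d) := by unfold sphereMeasure; infer_instance

variable {d : ℕ}

lemma uu_cont (s : unitSphere d) : Continuous (uu s) := continuous_const.inner continuous_subtype_val

lemma uu_abs_le (s : unitSphere d) (x : unitSphere d) : |uu s x| ≤ 1 := by
  have hs : ‖(s : EuclideanSpace ℝ (Fin (d+1)))‖ = 1 := by
    have := s.2; rwa [mem_sphere_zero_iff_norm] at this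
  have hx : ‖(x : EuclideanSpace ℝ (Fin (d+1)))‖ = 1 := by
    have := x.2; rwa [mem_sphere_zero_iff_norm] at this
  calc |uu s x| ≤ ‖(s : EuclideanSpace ℝ (Fin (d+1)))‖ * ‖(x : EuclideanSpace ℝ (Fin (d+1)))‖ :=
        abs_real_inner_le_norm _ _
    _ = 1 := by rw [hs, hx, mul_one]

lemma exp_integrable (s : unitSphere d) (β : ℝ) :
    Integrable (fun x => Real.exp (β * uu s x)) (sphereMeasure d) := by
  refine Integrable.mono' (integrable_const (Real.exp |β|))
    ((Real.continuous_exp.comp ((continuous_const.mul (uu_cont s)))).aestronglyMeasurable) ?_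
  refine Filter.Eventually.of_forall fun x => ?_
  rw [Real.norm_eq_abs, abs_of_pos (Real.exp_pos _)]
  apply Real.exp_le_exp.2
  calc β * uu s x ≤ |β * uu s x| := le_abs_self _
    _ = |β| * |uu s x| := abs_mul _ _
    _ ≤ |β| * 1 := by nlinarith [uu_abs_le s x, abs_nonneg β]
    _ = |β| := mul_one _

lemma J_cont (s : unitSphere d) : Continuous (J s) := by
  rw [continuous_iff_continuousAt]
  intro β₀
  apply continuousAt_of_dominated (bound := fun _ => Real.exp (|β₀| + 1))
  · exact Filter.Eventually.of_forall fun β =>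
      ((Real.continuous_exp.comp ((continuous_const.mul (uu_cont s)))).aestronglyMeasurable)
  · filter_upwards [Metric.ball_mem_nhds β₀ one_pos] with β hβ
    refine Filter.Eventually.of_forall fun x => ?_
    rw [Real.norm_eq_abs, abs_of_pos (Real.exp_pos _)]
    apply Real.exp_le_exp.2
    have h1 : |β| ≤ |β₀| + 1 := by
      have := mem_ball_iff_norm.1 hβ
      rw [Real.norm_eq_abs] at this
      have := abs_sub_abs_le_abs_sub β β₀
      linarith
    calc β * uu s x ≤ |β * uu s x| := le_abs_self _
      _ = |β| * |uu s x| := abs_mul _ _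
      _ ≤ (|β₀| + 1) * 1 := by nlinarith [uu_abs_le s x, abs_nonneg β, abs_nonneg β₀]
      _ = |β₀| + 1 := mul_one _
  · exact integrable_const _
  · exact Filter.Eventually.of_forall fun x =>
      (Real.continuous_exp.comp (continuous_id.mul continuous_const)).continuousAt

lemma cap_meas (s : unitSphere d) (c : ℝ) : MeasurableSet {x : unitSphere d | c < uu s x} := by
  have hVopen : IsOpen {v : EuclideanSpace ℝ (Fin (d+1)) | c < ⟪(s : EuclideanSpace ℝ (Fin (d+1))), v⟫} :=
    isOpen_lt continuous_const (continuous_const.inner continuous_id)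
  exact (hVopen.preimage continuous_subtype_val).measurableSet

lemma cap_pos (s : unitSphere d) (c : ℝ) (hc : c < 1) :
    0 < sphereMeasure d {x : unitSphere d | c < uu s x} := by
  classical
  have hs1 : ‖(s : EuclideanSpace ℝ (Fin (d+1)))‖ = 1 := by
    have := s.2; rwa [mem_sphere_zero_iff_norm] at this
  set V : Set (EuclideanSpace ℝ (Fin (d+1))) := {v | c < ⟪(s : EuclideanSpace ℝ (Fin (d+1))), v⟫} with hV
  have hVopen : IsOpen V := isOpen_lt continuous_const (continuous_const.inner continuous_id)
  rw [sphereMeasure, Measure.toSphere_apply' _ (cap_meas s c)]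
  set O : Set (EuclideanSpace ℝ (Fin (d+1))) :=
    {x | ‖x‖ ∈ Ioo (0:ℝ) 1} ∩ (fun x : EuclideanSpace ℝ (Fin (d+1)) => ‖x‖⁻¹ • x) ⁻¹' V with hO
  have hs0open : IsOpen {x : EuclideanSpace ℝ (Fin (d+1)) | ‖x‖ ∈ Ioo (0:ℝ) 1} :=
    isOpen_Ioo.preimage continuous_norm
  have hOopen : IsOpen O := by
    refine ContinuousOn.isOpen_inter_preimage ?_ hs0open hVopen
    exact ContinuousOn.smul ((continuous_norm.continuousOn).inv₀ fun x hx => ne_of_gt hx.1)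
      continuousOn_id
  have hOne : O.Nonempty := by
    refine ⟨(2⁻¹ : ℝ) • (s : EuclideanSpace ℝ (Fin (d+1))), ?_, ?_⟩
    · simp only [mem_setOf_eq, norm_smul, hs1, mul_one, Real.norm_eq_abs]
      constructor <;> rw [abs_of_nonneg] <;> norm_num
    · have hns : ‖(2⁻¹ : ℝ) • (s : EuclideanSpace ℝ (Fin (d+1)))‖ = 2⁻¹ := by
        simp [norm_smul, hs1]
      simp only [Set.mem_preimage, hns]
      rw [smul_smul]
      norm_num
      show c < ⟪(s : EuclideanSpace ℝ (Fin (d+1))), (s : EuclideanSpace ℝ (Fin (d+1)))⟫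
      rw [real_inner_self_eq_norm_sq, hs1]
      simpa using hc
  have hsub : O ⊆ Ioo (0:ℝ) 1 • (Subtype.val '' {x : unitSphere d | c < uu s x}) := by
    rintro x ⟨hx1, hx2⟩
    have hxn : ‖x‖ ≠ 0 := ne_of_gt hx1.1
    have hy1 : ‖(‖x‖⁻¹ • x)‖ = 1 := by
      rw [norm_smul, Real.norm_eq_abs, abs_inv, abs_of_nonneg (norm_nonneg x), inv_mul_cancel₀ hxn]
    have hysphere : (‖x‖⁻¹ • x) ∈ Metric.sphere (0 : EuclideanSpace ℝ (Fin (d+1))) 1 := by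
      rwa [mem_sphere_zero_iff_norm]
    have hmem : (⟨‖x‖⁻¹ • x, hysphere⟩ : unitSphere d) ∈ {x : unitSphere d | c < uu s x} := hx2
    have : x = ‖x‖ • (‖x‖⁻¹ • x) := by rw [smul_inv_smul₀ hxn]
    rw [this]
    exact Set.smul_mem_smul hx1 ⟨_, hmem, rfl⟩
  have hvolO : 0 < volume O := hOopen.measure_pos volume hOne
  have hN : (Module.finrank ℝ (EuclideanSpace ℝ (Fin (d+1))) : ℝ≥0∞) ≠ 0 := by
    simp [finrank_euclideanSpace]
  exact ENNReal.mul_pos hN (lt_of_lt_of_le hvolO (measure_mono hsub)).ne'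

lemma exp_mul_uu_le (s : unitSphere d) {β : ℝ} (hβ : 0 ≤ β) (x : unitSphere d) :
    Real.exp (β * uu s x) ≤ Real.exp β := by
  apply Real.exp_le_exp.2
  nlinarith [abs_le.1 (uu_abs_le s x)]

lemma univ_pos (s : unitSphere d) : 0 < ((sphereMeasure d) (Set.univ : Set (unitSphere d))).toReal := by
  have h := cap_pos s 0 one_pos
  have h2 : 0 < sphereMeasure d Set.univ := lt_of_lt_of_le h (measure_mono (subset_univ _))
  exact ENNReal.toReal_pos h2.ne' (measure_ne_top _ _)

lemma J_zero (s : unitSphere d) : J s 0 = ((sphereMeasure d) Set.univ).toReal := by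
  simp [J, Real.exp_zero, measureReal_def]

lemma J_pos (s : unitSphere d) (β : ℝ) : 0 < J s β := by
  have h1 : (Real.exp (-|β|)) * ((sphereMeasure d) Set.univ).toReal ≤ J s β := by
    rw [mul_comm, ← smul_eq_mul, ← measureReal_def, ← integral_const]
    apply integral_mono (integrable_const _) (exp_integrable s β)
    intro x
    simp only
    apply Real.exp_le_exp.2
    nlinarith [abs_le.1 (uu_abs_le s x), le_abs_self β, neg_abs_le β]
  have h2 := mul_pos (Real.exp_pos (-|β|)) (univ_pos s)
  linarith

lemma J_upper (s : unitSphere d) {β : ℝ} (hβ : 0 ≤ β) : J s β ≤ Real.exp β * ((sphereMeasure d) Set.univ).toReal := by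
  rw [mul_comm, ← smul_eq_mul, ← measureReal_def, ← integral_const]
  exact integral_mono (exp_integrable s β) (integrable_const _) (exp_mul_uu_le s hβ)

lemma J_lower (s : unitSphere d) {β c : ℝ} (hβ : 0 ≤ β) :
    Real.exp (c * β) * ((sphereMeasure d) {x : unitSphere d | c < uu s x}).toReal ≤ J s β := by
  set cap := {x : unitSphere d | c < uu s x}
  calc Real.exp (c * β) * ((sphereMeasure d) cap).toReal
      ≤ ∫ x in cap, Real.exp (β * uu s x) ∂(sphereMeasure d) := by
        rw [← measureReal_def]
        apply setIntegral_ge_of_const_le_real (cap_meas s c) (measure_ne_top _ _)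
        · intro x hx
          apply Real.exp_le_exp.2
          have : c < uu s x := hx
          nlinarith
        · exact (exp_integrable s β).integrableOn
    _ ≤ J s β := setIntegral_le_integral (exp_integrable s β)
        (Filter.Eventually.of_forall fun x => (Real.exp_pos _).le)

lemma J_holder (s : unitSphere d) (β : ℝ) {r : ℝ} (hr0 : 0 ≤ r) (hr1 : r ≤ 1) :
    J s (r * β) ≤ (J s β) ^ r * (J s 0) ^ (1 - r) := by
  rcases eq_or_lt_of_le hr0 with h0 | h0
  · simp [← h0]
  rcases eq_or_lt_of_le hr1 with h1 | h1
  · simp [h1]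
  set σ := sphereMeasure d
  have hconj : (1/r).HolderConjugate (1/(1-r)) := by
    exact Real.holderConjugate_one_div h0 (by linarith) (by ring)
  have hmeas : ∀ γ : ℝ, AEMeasurable (fun x => ENNReal.ofReal (Real.exp (γ * uu s x))) σ := by
    intro γ
    exact (ENNReal.continuous_ofReal.comp
      (Real.continuous_exp.comp (continuous_const.mul (uu_cont s)))).measurable.aemeasurable
  have key := ENNReal.lintegral_mul_le_Lp_mul_Lq σ hconj
    (f := fun x => (ENNReal.ofReal (Real.exp (β * uu s x))) ^ r) (g := fun _ => 1)
    ((hmeas β).pow_const r) aemeasurable_const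
  simp only [Pi.mul_apply, mul_one, ENNReal.one_rpow, lintegral_one, one_div_one_div] at key
  have hofReal : ∀ γ : ℝ, ENNReal.ofReal (J s γ) =
      ∫⁻ x, ENNReal.ofReal (Real.exp (γ * uu s x)) ∂σ := fun γ =>
    ofReal_integral_eq_lintegral_ofReal (exp_integrable s γ)
      (Filter.Eventually.of_forall fun x => (Real.exp_pos _).le)
  have e1 : (fun x => (ENNReal.ofReal (Real.exp (β * uu s x))) ^ r)
      = fun x => ENNReal.ofReal (Real.exp (r * β * uu s x)) := by
    funext x
    rw [ENNReal.ofReal_rpow_of_pos (Real.exp_pos _), ← Real.exp_mul]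
    ring_nf
  have e2 : (fun x => ((ENNReal.ofReal (Real.exp (β * uu s x))) ^ r) ^ (1/r))
      = fun x => ENNReal.ofReal (Real.exp (β * uu s x)) := by
    funext x
    rw [← ENNReal.rpow_mul, mul_one_div_cancel h0.ne', ENNReal.rpow_one]
  rw [e1, e2, ← hofReal, ← hofReal] at key
  have huniv : σ Set.univ = ENNReal.ofReal (J s 0) := by
    rw [J_zero, ENNReal.ofReal_toReal (measure_ne_top _ _)]
  rw [huniv, ENNReal.ofReal_rpow_of_pos (J_pos s β), ENNReal.ofReal_rpow_of_pos (J_pos s 0),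
    ← ENNReal.ofReal_mul (Real.rpow_nonneg (J_pos s β).le _)] at key
  exact (ENNReal.ofReal_le_ofReal_iff
    (mul_nonneg (Real.rpow_nonneg (J_pos s β).le _) (Real.rpow_nonneg (J_pos s 0).le _))).1 key

/-- with `B(t) = ∫_0^1 r · I(r/t)/I(1/t) dr`, one has `lim_{t→0⁺} B(t) = 0`,
where `I(β) = ∫_{S^d} exp (β ⟪s, x⟫) dσ x` is the von Mises–Fisher normalization integral
(`C_d(β) = I(β)⁻¹`). -/
theorem vmf_coefficient_B_tendsto_zero (d : ℕ) (hd : 1 ≤ d) (s : unitSphere d)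
    (I : ℝ → ℝ)
    (hI : ∀ β : ℝ, I β =
      ∫ x : unitSphere d, Real.exp (β * ⟪(s : EuclideanSpace ℝ (Fin (d + 1))), (x : EuclideanSpace ℝ (Fin (d + 1)))⟫) ∂(sphereMeasure d))
    (B : ℝ → ℝ)
    (hB : ∀ t : ℝ, B t = ∫ r in (0 : ℝ)..1, r * I (r / t) / I (1 / t)) :
    Tendsto B (nhdsWithin 0 (Set.Ioi 0)) (nhds 0) := by
  have hIJ : ∀ β, I β = J s β := fun β => hI β
  -- the measure of a fixed cap
  set m : ℝ := ((sphereMeasure d) {x : unitSphere d | (1:ℝ)/2 < uu s x}).toReal with hm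
  have hmpos : 0 < m :=
    ENNReal.toReal_pos (cap_pos s (1/2) (by norm_num)).ne' (measure_ne_top _ _)
  -- I (1/t) tends to infinity
  have hinv : Tendsto (fun t : ℝ => 1 / t) (nhdsWithin 0 (Set.Ioi 0)) atTop := by
    simpa [one_div] using tendsto_inv_nhdsGT_zero
  have haux : Tendsto (fun β : ℝ => Real.exp ((1/2) * β) * m) atTop atTop := by
    apply Tendsto.atTop_mul_const hmpos
    exact Real.tendsto_exp_atTop.comp (Tendsto.const_mul_atTop (by norm_num) tendsto_id)
  have htend : Tendsto (fun t : ℝ => J s (1 / t)) (nhdsWithin 0 (Set.Ioi 0)) atTop := by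
    apply tendsto_atTop_mono' _ _ (haux.comp hinv)
    filter_upwards [self_mem_nhdsWithin] with t ht
    exact J_lower s (le_of_lt (one_div_pos.2 (Set.mem_Ioi.1 ht)))
  -- the enveloping function g
  set g : ℝ → ℝ := fun t => (Real.log (J s (1 / t) / J s 0))⁻¹ with hg
  have hgtend : Tendsto g (nhdsWithin 0 (Set.Ioi 0)) (nhds 0) := by
    apply tendsto_inv_atTop_zero.comp
    apply Real.tendsto_log_atTop.comp
    exact htend.atTop_div_const (J_pos s 0)
  -- eventually, B t is squeezed between 0 and g t
  have hBnonneg : ∀ t : ℝ, 0 ≤ B t := by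
    intro t
    rw [hB t]
    apply intervalIntegral.integral_nonneg zero_le_one
    intro r hr
    rw [hIJ, hIJ]
    exact div_nonneg (mul_nonneg hr.1 (J_pos s _).le) (J_pos s _).le
  have hBle : ∀ᶠ t in nhdsWithin 0 (Set.Ioi 0), B t ≤ g t := by
    filter_upwards [self_mem_nhdsWithin, htend.eventually_gt_atTop (J s 0)] with t ht hXgt
    have htpos : (0:ℝ) < t := ht
    set X : ℝ := J s (1 / t) with hX
    have hXpos : 0 < X := J_pos s _
    have hJ0pos : 0 < J s 0 := J_pos s 0
    set L : ℝ := Real.log (X / J s 0) with hLdef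
    have hL : 0 < L := Real.log_pos (by rw [lt_div_iff₀ hJ0pos]; linarith)
    have hLeq : L = Real.log X - Real.log (J s 0) := Real.log_div hXpos.ne' hJ0pos.ne'
    -- pointwise bound
    have hpt : ∀ r ∈ Icc (0:ℝ) 1, r * I (r / t) / I (1 / t) ≤ Real.exp (r * L) * Real.exp (-L) := by
      intro r hr
      rw [hIJ, hIJ]
      have hrt : r / t = r * (1 / t) := div_eq_mul_one_div r t
      have h1 : J s (r / t) ≤ X ^ r * (J s 0) ^ (1 - r) := by
        rw [hrt]; exact J_holder s (1/t) hr.1 hr.2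
      have h2 : r * J s (r / t) / X ≤ X ^ r * (J s 0) ^ (1 - r) / X := by
        apply (div_le_div_iff_of_pos_right hXpos).2
        calc r * J s (r / t) ≤ 1 * (X ^ r * (J s 0) ^ (1 - r)) :=
              mul_le_mul hr.2 h1 (J_pos s _).le zero_le_one
          _ = X ^ r * (J s 0) ^ (1 - r) := one_mul _
      refine h2.trans_eq ?_
      rw [Real.rpow_def_of_pos hXpos, Real.rpow_def_of_pos hJ0pos, ← Real.exp_add,
        div_eq_iff hXpos.ne']
      conv_rhs => rw [← Real.exp_log hXpos]
      rw [← Real.exp_add, ← Real.exp_add, Real.exp_eq_exp, hLeq]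
      ring
    -- integrate the bound
    have hFcont : Continuous (fun r : ℝ => r * I (r / t) / I (1 / t)) := by
      have : (fun r : ℝ => r * I (r / t) / I (1 / t))
          = fun r : ℝ => r * J s (r * (1 / t)) / X := by
        funext r
        rw [hIJ, hIJ, div_eq_mul_one_div r t]
      rw [this]
      exact (continuous_id.mul ((J_cont s).comp (continuous_mul_right _))).div_const _
    have hint : ∫ r in (0:ℝ)..1, Real.exp (r * L) * Real.exp (-L) ≤ g t := by
      rw [intervalIntegral.integral_mul_const]
      have hcomp : (∫ r in (0:ℝ)..1, Real.exp (r * L))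
          = L⁻¹ • ∫ x in (0 * L)..(1 * L), Real.exp x :=
        intervalIntegral.integral_comp_mul_right Real.exp hL.ne'
      rw [hcomp, zero_mul, one_mul, integral_exp, Real.exp_zero, smul_eq_mul]
      have hexp : Real.exp (-L) ≤ 1 := Real.exp_le_one_iff.2 (by linarith)
      have hgt : g t = L⁻¹ := rfl
      rw [hgt]
      have h3 : L⁻¹ * (Real.exp L - 1) * Real.exp (-L) = L⁻¹ * (1 - Real.exp (-L)) := by
        rw [mul_assoc, sub_mul, ← Real.exp_add, add_neg_cancel, Real.exp_zero, one_mul]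
      rw [h3]
      have h4 : 1 - Real.exp (-L) ≤ 1 := by linarith [Real.exp_pos (-L)]
      calc L⁻¹ * (1 - Real.exp (-L)) ≤ L⁻¹ * 1 :=
            mul_le_mul_of_nonneg_left h4 (inv_nonneg.2 hL.le)
        _ = L⁻¹ := mul_one _
    calc B t = ∫ r in (0:ℝ)..1, r * I (r / t) / I (1 / t) := hB t
      _ ≤ ∫ r in (0:ℝ)..1, Real.exp (r * L) * Real.exp (-L) := by
          apply intervalIntegral.integral_mono_on zero_le_one
            (hFcont.intervalIntegrable 0 1)
            (((Real.continuous_exp.comp (continuous_mul_right L)).mul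
              continuous_const).intervalIntegrable 0 1) hpt
      _ ≤ g t := hint
  exact squeeze_zero' (Filter.Eventually.of_forall hBnonneg) hBle hgtend
end
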